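/- Let U ⊆ ℝ² be open with coordinates (u,v), let ω : U → ℝ be smooth with ω_uu + ω_vv = −8 sinh ω, and let α₂, α₃ : U → Im ℍ be smooth imaginary-quaternion-valued maps with ⟨α₂,α₂⟩ = ⟨α₃,α₃⟩ = 2e^ω, ⟨α₂,α₃⟩ = 0, satisfying the frame equations ∂_u α₂ = ½ω_u α₂ − ½ω_v α₃ − e^{−ω} α₂×α₃, ∂_v α₃ = −∂_u α₂, ∂_v α₂ = ½ω_v α₂ + ½ω_u α₃ + α₂×α₃, ∂_u α₃ = ½ω_v α₂ + ½ω_u α₃ − α₂×α₃. Define on U × ℝ (coordinates (u,v,t), with β₁, β₂, β₃ independent of t): β₁ = −(√3/4) e^{−ω} α₂×α₃, β₂ = (e^{−ω}/8)(4e^ω α₂ − 4α₃ + ω_v α₂×α₃), β₃ = −(e^{−ω}/8)(4α₂ − 4e^ω α₃ + ω_u α₂×α₃). Then the integrability (Maurer–Cartan) conditions hold: ∂_u β₁ − ∂_t β₂ = 2 β₁×β₂, ∂_v β₁ − ∂_t β₃ = 2 β₁×β₃, and ∂_u β₃ − ∂_v β₂ = 2 β₃×β₂. -/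

import Mathlib

noncomputable section

open Quaternion

/-- Euclidean inner product on the quaternions: `⟨x,y⟩ = Re (x * star y)`. -/
def ipQ (x y : ℍ[ℝ]) : ℝ := (x * star y).re

/-- Cross product of (imaginary) quaternions: `α × β = ½(αβ − βα)`. -/
def crossQ (a b : ℍ[ℝ]) : ℍ[ℝ] := (1 / 2 : ℝ) • (a * b - b * a)

/-- Partial derivative in the first coordinate direction of `ℝ²`. -/
def pdu {E : Type*} [NormedAddCommGroup E] [NormedSpace ℝ E]
    (f : ℝ × ℝ → E) (x : ℝ × ℝ) : E := fderiv ℝ f x (1, 0)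

/-- Partial derivative in the second coordinate direction of `ℝ²`. -/
def pdv {E : Type*} [NormedAddCommGroup E] [NormedSpace ℝ E]
    (f : ℝ × ℝ → E) (x : ℝ × ℝ) : E := fderiv ℝ f x (0, 1)

private lemma coe_eq_smul_one (c : ℝ) : ((c : ℝ) : ℍ[ℝ]) = c • (1:ℍ[ℝ]) := by
  simpa using (Quaternion.smul_coe c (1:ℝ)).symm

private lemma quatMul {A B : ℍ[ℝ]} {r : ℝ} (hA0 : A.re = 0) (hB0 : B.re = 0)
    (hAA : ipQ A A = r) (hBB : ipQ B B = r) (hAB : ipQ A B = 0) :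
    A * A = (-r) • (1:ℍ[ℝ]) ∧ B * B = (-r) • (1:ℍ[ℝ]) ∧ B * A = -(A * B) ∧
    A * (A * B) = (-r) • B ∧ (A * B) * B = (-r) • A ∧ (A * B) * A = r • B ∧
    B * (A * B) = r • A ∧ (A * B) * (A * B) = (-(r*r)) • (1:ℍ[ℝ]) := by
  have sA : star A = -A := Quaternion.star_eq_neg.2 hA0
  have sB : star B = -B := Quaternion.star_eq_neg.2 hB0
  have hnA : (normSq A : ℝ) = r := by
    have h := hAA; rw [ipQ, Quaternion.self_mul_star, Quaternion.re_coe] at h; exact h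
  have hnB : (normSq B : ℝ) = r := by
    have h := hBB; rw [ipQ, Quaternion.self_mul_star, Quaternion.re_coe] at h; exact h
  have mAA : A * A = (-r) • (1:ℍ[ℝ]) := by
    have e := Quaternion.self_mul_star A
    rw [sA, mul_neg, hnA, coe_eq_smul_one] at e
    have := neg_eq_iff_eq_neg.mp e
    rw [this, ← neg_smul]
  have mBB : B * B = (-r) • (1:ℍ[ℝ]) := by
    have e := Quaternion.self_mul_star B
    rw [sB, mul_neg, hnB, coe_eq_smul_one] at e
    have := neg_eq_iff_eq_neg.mp e
    rw [this, ← neg_smul]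
  have mBA : B * A = -(A * B) := by
    have h0 : (A * B).re = 0 := by
      have h := hAB; rw [ipQ, sB, mul_neg, Quaternion.re_neg, neg_eq_zero] at h; exact h
    have h := Quaternion.star_eq_neg.2 h0
    rw [star_mul, sA, sB, neg_mul_neg] at h
    exact h
  have mAAB : A * (A * B) = (-r) • B := by rw [← mul_assoc, mAA, smul_mul_assoc, one_mul]
  have mABB : (A * B) * B = (-r) • A := by rw [mul_assoc, mBB, mul_smul_comm, mul_one]
  have mABA : (A * B) * A = r • B := by
    rw [mul_assoc, mBA, mul_neg, mAAB, ← neg_smul, neg_neg]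
  have mBAB : B * (A * B) = r • A := by
    rw [← mul_assoc, mBA, neg_mul, mABB, ← neg_smul, neg_neg]
  have mABAB : (A * B) * (A * B) = (-(r*r)) • (1:ℍ[ℝ]) := by
    rw [← mul_assoc, mABA, smul_mul_assoc, mBB, smul_smul]; module
  exact ⟨mAA, mBB, mBA, mAAB, mABB, mABA, mBAB, mABAB⟩

set_option maxHeartbeats 4000000 in
/-- for a minimal surface frame `α₂ = p⁻¹p_u`, `α₃ = p⁻¹p_v` (isothermal
coordinates, conformal factor `2e^ω`, Sinh-Gordon equation, frame equations), the
quaternion-valued 1-form with coefficients `β₁, β₂, β₃` (independent of `t`) satisfies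
the Maurer–Cartan integrability conditions `∂_u β₁ − ∂_t β₂ = 2β₁×β₂`,
`∂_v β₁ − ∂_t β₃ = 2β₁×β₃`, `∂_u β₃ − ∂_v β₂ = 2β₃×β₂`. -/

theorem stmt17 (U : Set (ℝ × ℝ)) (hU : IsOpen U)
    (ω : ℝ × ℝ → ℝ) (hω : ContDiffOn ℝ (⊤ : ℕ∞) ω U)
    (hsg : ∀ x ∈ U, pdu (pdu ω) x + pdv (pdv ω) x = -8 * Real.sinh (ω x))
    (α₂ α₃ : ℝ × ℝ → ℍ[ℝ])
    (hα₂s : ContDiffOn ℝ (⊤ : ℕ∞) α₂ U) (hα₃s : ContDiffOn ℝ (⊤ : ℕ∞) α₃ U)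
    (him₂ : ∀ x ∈ U, (α₂ x).re = 0) (him₃ : ∀ x ∈ U, (α₃ x).re = 0)
    (hn₂ : ∀ x ∈ U, ipQ (α₂ x) (α₂ x) = 2 * Real.exp (ω x))
    (hn₃ : ∀ x ∈ U, ipQ (α₃ x) (α₃ x) = 2 * Real.exp (ω x))
    (horth : ∀ x ∈ U, ipQ (α₂ x) (α₃ x) = 0)
    (hf₁ : ∀ x ∈ U, pdu α₂ x = (pdu ω x / 2) • α₂ x - (pdv ω x / 2) • α₃ x
      - Real.exp (-ω x) • crossQ (α₂ x) (α₃ x))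
    (hf₂ : ∀ x ∈ U, pdv α₃ x = -pdu α₂ x)
    (hf₃ : ∀ x ∈ U, pdv α₂ x = (pdv ω x / 2) • α₂ x + (pdu ω x / 2) • α₃ x
      + crossQ (α₂ x) (α₃ x))
    (hf₄ : ∀ x ∈ U, pdu α₃ x = (pdv ω x / 2) • α₂ x + (pdu ω x / 2) • α₃ x
      - crossQ (α₂ x) (α₃ x))
    (β₁ β₂ β₃ : ℝ × ℝ → ℍ[ℝ])
    (hβ₁ : β₁ = fun x => -((Real.sqrt 3 / 4) • (Real.exp (-ω x) • crossQ (α₂ x) (α₃ x))))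
    (hβ₂ : β₂ = fun x => (Real.exp (-ω x) / 8) •
      ((4 * Real.exp (ω x)) • α₂ x - (4 : ℝ) • α₃ x + pdv ω x • crossQ (α₂ x) (α₃ x)))
    (hβ₃ : β₃ = fun x => -((Real.exp (-ω x) / 8) •
      ((4 : ℝ) • α₂ x - (4 * Real.exp (ω x)) • α₃ x + pdu ω x • crossQ (α₂ x) (α₃ x)))) :
    ∀ x ∈ U,
      pdu β₁ x = (2 : ℝ) • crossQ (β₁ x) (β₂ x) ∧
      pdv β₁ x = (2 : ℝ) • crossQ (β₁ x) (β₃ x) ∧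
      pdu β₃ x - pdv β₂ x = (2 : ℝ) • crossQ (β₃ x) (β₂ x) := by
  subst hβ₁ hβ₂ hβ₃
  intro x hx
  have hmem : U ∈ nhds x := hU.mem_nhds hx
  have hωd : DifferentiableAt ℝ ω x := (hω.contDiffAt hmem).differentiableAt (by simp)
  have hAd : DifferentiableAt ℝ α₂ x := (hα₂s.contDiffAt hmem).differentiableAt (by simp)
  have hBd : DifferentiableAt ℝ α₃ x := (hα₃s.contDiffAt hmem).differentiableAt (by simp)
  have hfd : ContDiffOn ℝ (⊤ : ℕ∞) (fun y => fderiv ℝ ω y) U := hω.fderiv_of_isOpen hU (by simp)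
  have hfdx : DifferentiableAt ℝ (fun y => fderiv ℝ ω y) x :=
    (hfd.contDiffAt hmem).differentiableAt (by simp)
  have hPd : DifferentiableAt ℝ (pdu ω) x := hfdx.clm_apply (differentiableAt_const _)
  have hQd : DifferentiableAt ℝ (pdv ω) x := hfdx.clm_apply (differentiableAt_const _)
  have hA' := hAd.hasFDerivAt
  have hB' := hBd.hasFDerivAt
  have hω' := hωd.hasFDerivAt
  have hP' := hPd.hasFDerivAt
  have hQ' := hQd.hasFDerivAt
  have hE' : HasFDerivAt (fun y => Real.exp (-ω y)) (Real.exp (-ω x) • -fderiv ℝ ω x) x :=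
    hω'.neg.exp
  have hE : HasFDerivAt (fun y => Real.exp (ω y)) (Real.exp (ω x) • fderiv ℝ ω x) x := hω'.exp
  have hMul := (hA'.mul' hB').sub (hB'.mul' hA')
  obtain ⟨mAA, mBB, mBA, mAAB, mABB, mABA, mBAB, mABAB⟩ :=
    quatMul (him₂ x hx) (him₃ x hx) (hn₂ x hx) (hn₃ x hx) (horth x hx)
  have hF1 := hf₁ x hx
  have hF2 := hf₂ x hx; rw [hf₁ x hx] at hF2
  have hF3 := hf₃ x hx
  have hF4 := hf₄ x hx
  simp only [pdu, pdv, crossQ] at hF1 hF2 hF3 hF4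
  refine ⟨?_, ?_, ?_⟩
  · -- goal 1
    have H := ((hE'.const_mul (Real.sqrt 3 / 8)).neg).smul hMul
    have e := H.fderiv
    beta_reduce at e
    rw [show (fun x => -((Real.sqrt 3 / 4) • (Real.exp (-ω x) • crossQ (α₂ x) (α₃ x))))
        = fun y => (-(Real.sqrt 3 / 8 * Real.exp (-ω y))) • (α₂ y * α₃ y - α₃ y * α₂ y) from
      funext fun y => by simp only [crossQ]; module]
    simp only [pdu, pdv] at e ⊢
    erw [e]
    simp only [ContinuousLinearMap.add_apply, ContinuousLinearMap.sub_apply,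
      ContinuousLinearMap.smul_apply, ContinuousLinearMap.neg_apply,
      ContinuousLinearMap.smulRight_apply, ContinuousLinearMap.coe_smul', Pi.smul_apply,
      Pi.neg_apply, smul_eq_mul, hF1, hF2, hF3, hF4, crossQ, mul_add, add_mul, mul_sub, sub_mul,
      smul_mul_assoc, mul_smul_comm, neg_mul, mul_neg,
      mBA, mAA, mBB, mAAB, mABB, mABA, mBAB, mABAB, Real.exp_neg, op_smul_eq_mul, Pi.mul_apply, Pi.sub_apply, Pi.add_apply]
    match_scalars <;> (try field_simp) <;> ring
  · -- goal 2
    have H := ((hE'.const_mul (Real.sqrt 3 / 8)).neg).smul hMul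
    have e := H.fderiv
    beta_reduce at e
    rw [show (fun x => -((Real.sqrt 3 / 4) • (Real.exp (-ω x) • crossQ (α₂ x) (α₃ x))))
        = fun y => (-(Real.sqrt 3 / 8 * Real.exp (-ω y))) • (α₂ y * α₃ y - α₃ y * α₂ y) from
      funext fun y => by simp only [crossQ]; module]
    simp only [pdu, pdv] at e ⊢
    erw [e]
    simp only [ContinuousLinearMap.add_apply, ContinuousLinearMap.sub_apply,
      ContinuousLinearMap.smul_apply, ContinuousLinearMap.neg_apply,
      ContinuousLinearMap.smulRight_apply, ContinuousLinearMap.coe_smul', Pi.smul_apply,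
      Pi.neg_apply, smul_eq_mul, hF1, hF2, hF3, hF4, crossQ, mul_add, add_mul, mul_sub, sub_mul,
      smul_mul_assoc, mul_smul_comm, neg_mul, mul_neg,
      mBA, mAA, mBB, mAAB, mABB, mABA, mBAB, mABAB, Real.exp_neg, op_smul_eq_mul, Pi.mul_apply, Pi.sub_apply, Pi.add_apply]
    match_scalars <;> (try field_simp) <;> ring
  · -- goal 3
    have h21 := ((hE'.mul hE).const_mul ((1:ℝ)/2)).smul hA'
    have h22 := ((hE'.const_mul ((1:ℝ)/2)).neg).smul hB'
    have h23 := ((hE'.mul hQ').const_mul ((1:ℝ)/16)).smul hMul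
    have H2 := (h21.add h22).add h23
    have h31 := ((hE'.const_mul ((1:ℝ)/2)).neg).smul hA'
    have h32 := ((hE'.mul hE).const_mul ((1:ℝ)/2)).smul hB'
    have h33 := (((hE'.mul hP').const_mul ((1:ℝ)/16)).neg).smul hMul
    have H3 := (h31.add h32).add h33
    have e2 := H2.fderiv
    have e3 := H3.fderiv
    beta_reduce at e2 e3
    rw [show (fun x => (Real.exp (-ω x) / 8) •
          ((4 * Real.exp (ω x)) • α₂ x - (4 : ℝ) • α₃ x + pdv ω x • crossQ (α₂ x) (α₃ x)))
        = fun y => (1/2 * (Real.exp (-ω y) * Real.exp (ω y))) • α₂ y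
            + (-(1/2 * Real.exp (-ω y))) • α₃ y
            + (1/16 * (Real.exp (-ω y) * pdv ω y)) • (α₂ y * α₃ y - α₃ y * α₂ y) from
      funext fun y => by simp only [crossQ]; module,
      show (fun x => -((Real.exp (-ω x) / 8) •
          ((4 : ℝ) • α₂ x - (4 * Real.exp (ω x)) • α₃ x + pdu ω x • crossQ (α₂ x) (α₃ x))))
        = fun y => (-(1/2 * Real.exp (-ω y))) • α₂ y
            + (1/2 * (Real.exp (-ω y) * Real.exp (ω y))) • α₃ y
            + (-(1/16 * (Real.exp (-ω y) * pdu ω y))) • (α₂ y * α₃ y - α₃ y * α₂ y) from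
      funext fun y => by simp only [crossQ]; module]
    have hSG := hsg x hx
    simp only [pdu, pdv] at e2 e3 hSG ⊢
    rw [Real.sinh_eq] at hSG
    have hVV : fderiv ℝ (pdv ω) x (0,1)
        = -8*((Real.exp (ω x) - Real.exp (-ω x))/2) - fderiv ℝ (pdu ω) x (1,0) := by
      linarith
    erw [e2, e3]
    simp only [ContinuousLinearMap.add_apply, ContinuousLinearMap.sub_apply,
      ContinuousLinearMap.smul_apply, ContinuousLinearMap.neg_apply,
      ContinuousLinearMap.smulRight_apply, ContinuousLinearMap.coe_smul', Pi.smul_apply,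
      Pi.neg_apply, smul_eq_mul, pdu, pdv, hVV, hF1, hF2, hF3, hF4, crossQ, mul_add, add_mul, mul_sub,
      sub_mul, smul_mul_assoc, mul_smul_comm, neg_mul, mul_neg,
      mBA, mAA, mBB, mAAB, mABB, mABA, mBAB, mABAB, Real.exp_neg, op_smul_eq_mul, Pi.mul_apply, Pi.sub_apply, Pi.add_apply]
    match_scalars <;> (try field_simp) <;> ring
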